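/- Let m₁ and m₂ be relatively prime natural numbers with m₁+m₂ even. Then the rhodonea curve ρ^{(m)}_α has minimal period π, and for t ∈ [0,2π) the set S^{(m)}(t) = {s ∈ [0,2π) : ρ^{(m)}_α(s) = ρ^{(m)}_α(t)} satisfies: (i) #S^{(m)}(t) = 2m₂ if t = t^{(m)}_l for some l ∈ {0,…,4m₁m₂−1} with l ≡ m₁ (mod 2m₁); (ii) #S^{(m)}(t) = 4 if t = t^{(m)}_{2l} for some l ∈ {0,…,2m₁m₂−1} with l ≢ 0 (mod m₁); (iii) #S^{(m)}(t) = 2 for all other t ∈ [0,2π). -/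

import Mathlib

/-!
With `e(x) = exp(x i)`, the curve is `ρ(s) = e(-απ) (e((m₁+m₂)s) + e((m₁-m₂)s)) / 2`. Two sums of
two unit complex numbers agree only if they are the same pair, in some order, or both vanish; so
`ρ(s) = ρ(t)` iff the exponentials agree termwise, or crosswise, or `cos(m₂s) = cos(m₂t) = 0`.
Each agreement is a condition `(m₁(s-t), m₂(s∓t)) ∈ π·{(j, k) ∈ ℤ² | j + k even}`. For coprime odd
`m₁, m₂` termwise agreement means `s ≡ t (mod π)`; the crosswise solutions form at most one more
class `s₀ + πℤ`, which exists iff `m₁m₂t ∈ πℤ` and equals `t + πℤ` iff `m₂t ∈ πℤ`. Every class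
mod `π` meets `[0, 2π)` twice, and `cos(m₂·)` has `2m₂` zeros there.
-/

noncomputable section

/-- The rhodonea curve `ρ^{(m)}_α`. -/
def rho (m₁ m₂ : ℕ) (α : ℝ) (t : ℝ) : ℝ × ℝ :=
  (Real.cos (m₂ * t) * Real.cos (m₁ * t - α * Real.pi),
   Real.cos (m₂ * t) * Real.sin (m₁ * t - α * Real.pi))

/-- The sampling parameters `t^{(m)}_l = l π / (2 m₁ m₂)`. -/
def tSample (m₁ m₂ : ℕ) (l : ℕ) : ℝ := l * Real.pi / (2 * m₁ * m₂)

/-- The set `S^{(m)}(t)` of parameters in `[0, 2π)` hitting the same point as `t`. -/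
def Sset (m₁ m₂ : ℕ) (α t : ℝ) : Set ℝ :=
  {s | s ∈ Set.Ico (0 : ℝ) (2 * Real.pi) ∧ rho m₁ m₂ α s = rho m₁ m₂ α t}

/-- The sample point set `LS^{(m)}_α` along the rhodonea curve. -/
def LSa (m₁ m₂ : ℕ) (α : ℝ) : Set (ℝ × ℝ) :=
  {p | ∃ l : ℕ, l < 4 * m₁ * m₂ ∧ p = rho m₁ m₂ α (tSample m₁ m₂ l)}

/-- The nodal index set `I^{(m)}` as a set. -/
def Idx (m₁ m₂ : ℕ) : Set (ℤ × ℤ) :=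
  {i | 0 ≤ i.1 ∧ i.1 ≤ (m₁ : ℤ) ∧ -(2 * (m₂ : ℤ)) < i.2 ∧ i.2 ≤ 2 * (m₂ : ℤ) ∧
       (i.1 = (m₁ : ℤ) → i.2 ≤ 0) ∧ Even (i.1 + i.2)}

/-- The nodal index set `I^{(m)}` as a finset. -/
def IdxF (m₁ m₂ : ℕ) : Finset (ℤ × ℤ) :=
  (Finset.Icc (0 : ℤ) (m₁ : ℤ) ×ˢ Finset.Ioc (-(2 * (m₂ : ℤ))) (2 * (m₂ : ℤ))).filter
    (fun i => (i.1 = (m₁ : ℤ) → i.2 ≤ 0) ∧ Even (i.1 + i.2))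

/-- Radial coordinate `r^{(m₁)}_{i₁} = cos(i₁ π / (2 m₁))`. -/
def rI (m₁ : ℕ) (i₁ : ℤ) : ℝ := Real.cos (i₁ * Real.pi / (2 * m₁))

/-- Angular coordinate `θ^{(m₂)}_{i₂} = i₂ π / (2 m₂)`. -/
def thetaI (m₂ : ℕ) (i₂ : ℤ) : ℝ := i₂ * Real.pi / (2 * m₂)

/-- The rhodonea node `x^{(m)}_i` in Cartesian coordinates. -/
def node (m₁ m₂ : ℕ) (i : ℤ × ℤ) : ℝ × ℝ :=
  (rI m₁ i.1 * Real.cos (thetaI m₂ i.2), rI m₁ i.1 * Real.sin (thetaI m₂ i.2))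

/-- The rhodonea node set `LS^{(m)}`. -/
def LS (m₁ m₂ : ℕ) : Set (ℝ × ℝ) := node m₁ m₂ '' Idx m₁ m₂

/-- Chebyshev polynomial of the first kind, `T_n(r) = cos(n arccos r)`. -/
def chebT (n : ℕ) (r : ℝ) : ℝ := Real.cos (n * Real.arccos r)

/-- The closed unit disk `𝔻 ⊆ ℝ²`. -/
def closedDisk : Set (ℝ × ℝ) := {x | x.1 ^ 2 + x.2 ^ 2 ≤ 1}

/-- The weights `w^{(m)}_i`. -/
def wgt (m₁ m₂ : ℕ) (i : ℤ × ℤ) : ℝ :=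
  if i.1 = 0 then 1 / (4 * m₁ * m₂) else 2 / (4 * m₁ * m₂)

/-- The discrete basis functions `χ^{(m)}_γ(i)`. -/
def chi (m₁ m₂ : ℕ) (γ i : ℤ × ℤ) : ℂ :=
  (Real.cos (γ.1 * i.1 * Real.pi / (2 * m₁)) : ℂ) *
    Complex.exp (Complex.I * (γ.2 * i.2 * Real.pi / (2 * m₂)))

/-- The discrete inner product `⟨f, g⟩_w` on `L(I^{(m)})`. -/
def innerW (m₁ m₂ : ℕ) (f g : ℤ × ℤ → ℂ) : ℂ :=
  ∑ i ∈ IdxF m₁ m₂, (wgt m₁ m₂ i : ℂ) * f i * (starRingEnd ℂ) (g i)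

/-- The rectangular spectral index set `Γ^{(m)}_□`. -/
def GammaSq (m₁ m₂ : ℕ) : Finset (ℤ × ℤ) :=
  (Finset.Icc (0 : ℤ) (2 * (m₁ : ℤ)) ×ˢ Finset.Ioc (-(m₂ : ℤ)) (m₂ : ℤ)).filter
    (fun γ => Even (γ.1 + γ.2))

/-- The full frequency box `K^{(m)}`. -/
def KSet (m₁ m₂ : ℕ) : Finset (ℤ × ℤ) :=
  Finset.Icc (0 : ℤ) (2 * (m₁ : ℤ)) ×ˢ Finset.Ioc (-(2 * (m₂ : ℤ))) (2 * (m₂ : ℤ))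

/-- The flip (glide-reflection) operator `γ ↦ γ*` on `K^{(m)}`, with second
coordinate `(γ₂ + 2m₂) mod 4m₂` taken in `(-2m₂, 2m₂]`. -/
def flipOp (m₁ m₂ : ℕ) (γ : ℤ × ℤ) : ℤ × ℤ :=
  (2 * (m₁ : ℤ) - γ.1, if γ.2 ≤ 0 then γ.2 + 2 * (m₂ : ℤ) else γ.2 - 2 * (m₂ : ℤ))

/-- `Γ` is a spectral index set for `I^{(m)}`: a subset of `K^{(m)}` satisfying the
parity condition whose functions `χ^{(m)}_γ` form an orthogonal basis of `L(I^{(m)})`. -/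
def IsSpectral (m₁ m₂ : ℕ) (Γ : Finset (ℤ × ℤ)) : Prop :=
  Γ ⊆ KSet m₁ m₂ ∧ (∀ γ ∈ Γ, Even (γ.1 + γ.2)) ∧
  (∀ γ ∈ Γ, ∀ γ' ∈ Γ, γ ≠ γ' → innerW m₁ m₂ (chi m₁ m₂ γ) (chi m₁ m₂ γ') = 0) ∧
  LinearIndependent ℂ (fun γ : ↥Γ => fun i : ↥(IdxF m₁ m₂) => chi m₁ m₂ γ.1 i.1) ∧
  Submodule.span ℂ
    (Set.range (fun γ : ↥Γ => fun i : ↥(IdxF m₁ m₂) => chi m₁ m₂ γ.1 i.1)) = ⊤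

/-- The real discrete basis functions `χ^{(m)}_{ℛ,γ}(i)` (for `γ ∈ Γ`). -/
def chiR (m₁ m₂ : ℕ) (Γ : Finset (ℤ × ℤ)) (γ i : ℤ × ℤ) : ℝ :=
  Real.cos (γ.1 * i.1 * Real.pi / (2 * m₁)) *
    (if ((γ.1, -γ.2) ∈ Γ ∧ 0 ≤ γ.2) ∨ ((γ.1, -γ.2) ∉ Γ ∧ γ.1 ≤ (m₁ : ℤ))
     then Real.cos (γ.2 * i.2 * Real.pi / (2 * m₂))
     else Real.sin (γ.2 * i.2 * Real.pi / (2 * m₂)))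

/-- The Chebyshev–Fourier basis functions `X_γ(r, θ) = T_{γ₁}(r) e^{i γ₂ θ}`. -/
def Xfun (γ : ℤ × ℤ) (p : ℝ × ℝ) : ℂ :=
  (Real.cos (γ.1 * Real.arccos p.1) : ℂ) * Complex.exp (Complex.I * (γ.2 * p.2))

/-- The real Chebyshev–Fourier basis functions `X_{ℛ,γ}` (for `γ ∈ Γ`). -/
def XRfun (m₁ : ℕ) (Γ : Finset (ℤ × ℤ)) (γ : ℤ × ℤ) (p : ℝ × ℝ) : ℝ :=
  Real.cos (γ.1 * Real.arccos p.1) *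
    (if ((γ.1, -γ.2) ∈ Γ ∧ 0 ≤ γ.2) ∨ ((γ.1, -γ.2) ∉ Γ ∧ γ.1 ≤ (m₁ : ℤ))
     then Real.cos (γ.2 * p.2) else Real.sin (γ.2 * p.2))

/-- The Lagrange functions `L^{(m)}_i`. -/
def Lag (m₁ m₂ : ℕ) (Γ : Finset (ℤ × ℤ)) (i : ℤ × ℤ) (p : ℝ × ℝ) : ℂ :=
  (wgt m₁ m₂ i : ℂ) *
    ∑ γ ∈ Γ, ((starRingEnd ℂ) (chi m₁ m₂ γ i) /
      innerW m₁ m₂ (chi m₁ m₂ γ) (chi m₁ m₂ γ)) * Xfun γ p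

/-- The complex-valued version of `X_{ℛ,γ}`. -/
def XRc (m₁ : ℕ) (Γ : Finset (ℤ × ℤ)) (γ : ℤ × ℤ) (p : ℝ × ℝ) : ℂ :=
  (XRfun m₁ Γ γ p : ℂ)

/-- The real Lagrange functions `L^{(m)}_{ℛ,i}`. -/
def LagR (m₁ m₂ : ℕ) (Γ : Finset (ℤ × ℤ)) (i : ℤ × ℤ) (p : ℝ × ℝ) : ℂ :=
  (wgt m₁ m₂ i : ℂ) *
    ∑ γ ∈ Γ, ((chiR m₁ m₂ Γ γ i /
        (∑ j ∈ IdxF m₁ m₂, wgt m₁ m₂ j * chiR m₁ m₂ Γ γ j ^ 2) : ℝ) : ℂ) * XRc m₁ Γ γ p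

end

open Real ComplexConjugate

namespace Complex

lemma eq_and_eq_or_eq_and_eq_of_add_eq_add {z₁ z₂ w₁ w₂ : ℂ} (h₁ : ‖z₁‖ = 1) (h₂ : ‖z₂‖ = 1)
    (h₃ : ‖w₁‖ = 1) (h₄ : ‖w₂‖ = 1) (h : z₁ + z₂ = w₁ + w₂) (h₀ : z₁ + z₂ ≠ 0) :
    (w₁ = z₁ ∧ w₂ = z₂) ∨ (w₁ = z₂ ∧ w₂ = z₁) := by
  have conj_mul_self {z : ℂ} (hz : ‖z‖ = 1) : conj z * z = 1 := by
    rw [mul_comm, mul_conj, normSq_eq_norm_sq, hz]; norm_num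
  -- on the unit circle `conj (a + b) = (a + b) / (a b)`, so the sum also fixes the product
  have conj_add_mul {a b : ℂ} (ha : ‖a‖ = 1) (hb : ‖b‖ = 1) : conj (a + b) * (a * b) = a + b := by
    rw [map_add]; linear_combination b * conj_mul_self ha + a * conj_mul_self hb
  have hprod : z₁ * z₂ = w₁ * w₂ := by
    refine mul_left_cancel₀ ((map_ne_zero (starRingEnd ℂ)).mpr h₀) ?_
    rw [conj_add_mul h₁ h₂, h]
    exact (conj_add_mul h₃ h₄).symm
  have hroot : (w₁ - z₁) * (w₁ - z₂) = 0 := by linear_combination (-w₁) * h + hprod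
  rcases mul_eq_zero.mp hroot with hw | hw
  · exact Or.inl ⟨sub_eq_zero.mp hw, by linear_combination -h - hw⟩
  · exact Or.inr ⟨sub_eq_zero.mp hw, by linear_combination -h - hw⟩

end Complex

lemma Circle.coe_exp_add_add_coe_exp_sub (a b : ℝ) :
    (Circle.exp (a + b) + Circle.exp (a - b) : ℂ) = 2 * Real.cos b * Circle.exp a := by
  rw [Complex.ofReal_cos, Complex.two_cos]
  simp only [Circle.coe_exp, add_mul, ← Complex.exp_add]
  congr 2 <;> push_cast <;> ring

/-- The pairs `(x, y)` such that `(m₁ x / π, m₂ y / π)` lies in the checkerboard lattice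
`{(j, k) ∈ ℤ² | j + k even}`. -/
def checkerboard (m₁ m₂ : ℕ) : AddSubgroup (ℝ × ℝ) where
  carrier := {p | ∃ j k : ℤ, m₁ * p.1 = j * π ∧ m₂ * p.2 = k * π ∧ Even (j + k)}
  zero_mem' := ⟨0, 0, by simp⟩
  add_mem' := by
    rintro a b ⟨j, k, hj, hk, hjk⟩ ⟨j', k', hj', hk', hjk'⟩
    refine ⟨j + j', k + k', ?_, ?_, by rw [add_add_add_comm]; exact hjk.add hjk'⟩ <;>
      simp only [Prod.fst_add, Prod.snd_add, Int.cast_add]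
    · linear_combination hj + hj'
    · linear_combination hk + hk'
  neg_mem' := by
    rintro a ⟨j, k, hj, hk, hjk⟩
    refine ⟨-j, -k, ?_, ?_, by rw [← neg_add]; exact hjk.neg⟩ <;>
      simp only [Prod.fst_neg, Prod.snd_neg, Int.cast_neg]
    · linear_combination -hj
    · linear_combination -hk

lemma mem_checkerboard_iff {m₁ m₂ : ℕ} {p : ℝ × ℝ} :
    p ∈ checkerboard m₁ m₂ ↔
      Circle.exp (m₁ * p.1 + m₂ * p.2) = 1 ∧ Circle.exp (m₁ * p.1 - m₂ * p.2) = 1 := by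
  rw [Circle.exp_eq_one, Circle.exp_eq_one]
  constructor
  · rintro ⟨j, k, hj, hk, c, hc⟩
    have hc' : (j : ℝ) + k = c + c := by exact_mod_cast hc
    exact ⟨⟨c, by linear_combination hj + hk + π * hc'⟩,
      ⟨j - c, by push_cast; linear_combination hj - hk - π * hc'⟩⟩
  · rintro ⟨⟨n, hn⟩, ⟨n', hn'⟩⟩
    exact ⟨n + n', n - n', by push_cast; linear_combination (hn + hn') / 2,
      by push_cast; linear_combination (hn - hn') / 2, ⟨n, by ring⟩⟩

lemma rho_eq_equivRealProd (m₁ m₂ : ℕ) (α x : ℝ) :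
    rho m₁ m₂ α x =
      Complex.equivRealProd (Real.cos (m₂ * x) * Circle.exp (m₁ * x - α * π)) := by
  rw [Complex.equivRealProd_apply, Circle.coe_exp, Complex.re_ofReal_mul, Complex.im_ofReal_mul,
    Complex.exp_ofReal_mul_I_re, Complex.exp_ofReal_mul_I_im, rho]

lemma rho_eq_rho_iff_add_eq_add {m₁ m₂ : ℕ} {α s t : ℝ} :
    rho m₁ m₂ α s = rho m₁ m₂ α t ↔
      (Circle.exp (m₁ * s + m₂ * s) + Circle.exp (m₁ * s - m₂ * s) : ℂ) =
        Circle.exp (m₁ * t + m₂ * t) + Circle.exp (m₁ * t - m₂ * t) := by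
  rw [Circle.coe_exp_add_add_coe_exp_sub, Circle.coe_exp_add_add_coe_exp_sub,
    rho_eq_equivRealProd, rho_eq_equivRealProd, Equiv.apply_eq_iff_eq, Circle.exp_sub,
    Circle.exp_sub, Circle.coe_div, Circle.coe_div, mul_div_assoc', mul_div_assoc',
    div_left_inj' (Circle.coe_ne_zero _), mul_assoc, mul_assoc, mul_right_inj' two_ne_zero]

theorem rho_eq_rho_iff {m₁ m₂ : ℕ} {α s t : ℝ} :
    rho m₁ m₂ α s = rho m₁ m₂ α t ↔
      (s - t, s - t) ∈ checkerboard m₁ m₂ ∨ (s - t, s + t) ∈ checkerboard m₁ m₂ ∨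
        (Real.cos (m₂ * s) = 0 ∧ Real.cos (m₂ * t) = 0) := by
  have exp_sub_eq_one (a b : ℝ) : Circle.exp (a - b) = 1 ↔ Circle.exp a = Circle.exp b := by
    rw [Circle.exp_sub, div_eq_one]
  have hmatch : (s - t, s - t) ∈ checkerboard m₁ m₂ ↔
      Circle.exp (m₁ * s + m₂ * s) = Circle.exp (m₁ * t + m₂ * t) ∧
        Circle.exp (m₁ * s - m₂ * s) = Circle.exp (m₁ * t - m₂ * t) := by
    rw [mem_checkerboard_iff, ← exp_sub_eq_one, ← exp_sub_eq_one]; ring_nf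
  have hswap : (s - t, s + t) ∈ checkerboard m₁ m₂ ↔
      Circle.exp (m₁ * s + m₂ * s) = Circle.exp (m₁ * t - m₂ * t) ∧
        Circle.exp (m₁ * s - m₂ * s) = Circle.exp (m₁ * t + m₂ * t) := by
    rw [mem_checkerboard_iff, ← exp_sub_eq_one, ← exp_sub_eq_one]; ring_nf
  rw [rho_eq_rho_iff_add_eq_add, hmatch, hswap]
  constructor
  · intro h
    by_cases hs : Real.cos (m₂ * s) = 0
    · rw [Circle.coe_exp_add_add_coe_exp_sub, Circle.coe_exp_add_add_coe_exp_sub, hs] at h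
      refine Or.inr (Or.inr ⟨hs, ?_⟩)
      simpa only [Complex.ofReal_zero, mul_zero, zero_mul, zero_eq_mul, mul_eq_zero, two_ne_zero,
        false_or, Complex.ofReal_eq_zero, Circle.coe_ne_zero, or_false] using h
    have h₀ : (Circle.exp (m₁ * s + m₂ * s) + Circle.exp (m₁ * s - m₂ * s) : ℂ) ≠ 0 := by
      rw [Circle.coe_exp_add_add_coe_exp_sub]
      exact mul_ne_zero (mul_ne_zero two_ne_zero (by exact_mod_cast hs)) (Circle.coe_ne_zero _)
    rcases Complex.eq_and_eq_or_eq_and_eq_of_add_eq_add (Circle.norm_coe _) (Circle.norm_coe _)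
      (Circle.norm_coe _) (Circle.norm_coe _) h h₀ with ⟨h₁, h₂⟩ | ⟨h₁, h₂⟩
    · exact Or.inl ⟨(Circle.coe_inj.mp h₁).symm, (Circle.coe_inj.mp h₂).symm⟩
    · exact Or.inr (Or.inl ⟨(Circle.coe_inj.mp h₂).symm, (Circle.coe_inj.mp h₁).symm⟩)
  · rintro (⟨h₁, h₂⟩ | ⟨h₁, h₂⟩ | ⟨hs, ht⟩)
    · rw [h₁, h₂]
    · rw [h₁, h₂, add_comm]
    · rw [Circle.coe_exp_add_add_coe_exp_sub, Circle.coe_exp_add_add_coe_exp_sub, hs, ht]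
      simp

lemma mk_intCast_mul_pi_mem_checkerboard {m₁ m₂ : ℕ} (heven : Even (m₁ + m₂)) (k : ℤ) :
    ((k * π : ℝ), (k * π : ℝ)) ∈ checkerboard m₁ m₂ := by
  refine ⟨m₁ * k, m₂ * k, by push_cast; ring, by push_cast; ring, ?_⟩
  rw [← add_mul]
  exact (by exact_mod_cast heven : Even ((m₁ : ℤ) + m₂)).mul_right k

lemma mk_self_mem_checkerboard_iff {m₁ m₂ : ℕ} (hcop : m₁.Coprime m₂) (heven : Even (m₁ + m₂))
    {d : ℝ} : (d, d) ∈ checkerboard m₁ m₂ ↔ ∃ k : ℤ, d = k * π := by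
  constructor
  · rintro ⟨j, k, hj, hk, -⟩
    obtain ⟨u, v, huv⟩ := Nat.isCoprime_iff_coprime.mpr hcop
    have huv' : (u : ℝ) * m₁ + v * m₂ = 1 := by exact_mod_cast huv
    exact ⟨u * j + v * k, by push_cast; linear_combination u * hj + v * hk - d * huv'⟩
  · rintro ⟨k, rfl⟩
    exact mk_intCast_mul_pi_mem_checkerboard heven k

lemma mk_sub_add_self_mem_checkerboard_iff {m₁ m₂ : ℕ} {t : ℝ} :
    (t - t, t + t) ∈ checkerboard m₁ m₂ ↔ ∃ k : ℤ, m₂ * t = k * π := by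
  constructor
  · rintro ⟨j, k, hj, hk, hjk⟩
    have hj0 : j = 0 := by simpa [Real.pi_ne_zero] using hj.symm
    obtain ⟨c, hc⟩ : Even k := by simpa [hj0] using hjk
    exact ⟨c, by rw [hc] at hk; push_cast at hk; linarith⟩
  · rintro ⟨k, hk⟩
    exact ⟨0, 2 * k, by simp, by push_cast; linarith, by simp⟩

lemma exists_mk_sub_add_mem_checkerboard_iff {m₁ m₂ : ℕ} (ho₁ : Odd m₁) (ho₂ : Odd m₂)
    (hcop : m₁.Coprime m₂) {t : ℝ} :
    (∃ s, (s - t, s + t) ∈ checkerboard m₁ m₂) ↔ ∃ N : ℤ, m₁ * m₂ * t = N * π := by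
  constructor
  · rintro ⟨s, j, k, hj, hk, c, hc⟩
    obtain ⟨a, rfl⟩ := ho₁
    obtain ⟨b, rfl⟩ := ho₂
    have hc' : (j : ℝ) + k = c + c := by exact_mod_cast hc
    refine ⟨c - j + a * k - b * j, ?_⟩
    push_cast at hj hk ⊢
    linear_combination ((2 * a + 1) * hk - (2 * b + 1) * hj + π * hc') / 2
  · rintro ⟨N, hN⟩
    obtain ⟨u, v, huv⟩ := Nat.isCoprime_iff_coprime.mpr hcop
    have huv' : (u : ℝ) * m₁ + v * m₂ = 1 := by exact_mod_cast huv
    have hm₁ : (m₁ : ℝ) ≠ 0 := by exact_mod_cast ho₁.pos.ne'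
    -- Bézout: `s = t - 2 N v π / m₁` solves `m₁ (s - t) = -2Nv π`, `m₂ (s + t) = 2Nu π`
    refine ⟨t - 2 * N * v * π / m₁, -(2 * N * v), 2 * N * u, ?_, ?_, ⟨N * (u - v), by ring⟩⟩
    · push_cast; field_simp; ring
    · push_cast
      refine mul_left_cancel₀ hm₁ ?_
      field_simp
      linear_combination 2 * hN - 2 * N * π * huv'

def piCoset (x : ℝ) : Set ℝ := {s | s ∈ Set.Ico 0 (2 * π) ∧ ∃ k : ℤ, s - x = k * π}

lemma piCoset_eq_pair (x : ℝ) :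
    piCoset x = {toIcoMod pi_pos 0 x, toIcoMod pi_pos 0 x + π} := by
  obtain ⟨⟨hy₀, hyπ⟩, z, hz⟩ := (toIcoMod_eq_iff pi_pos).mp (rfl : toIcoMod pi_pos 0 x = _)
  set y := toIcoMod pi_pos 0 x
  rw [zero_add] at hyπ
  rw [zsmul_eq_mul] at hz
  ext s
  simp only [piCoset, Set.mem_ofPred_eq, Set.mem_Ico, Set.mem_insert_iff, Set.mem_singleton_iff]
  constructor
  · rintro ⟨⟨hs₀, hs₂π⟩, k, hk⟩
    have hlo : (-1 : ℝ) < k + z := by nlinarith [pi_pos]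
    have hhi : (k + z : ℝ) < 2 := by nlinarith [pi_pos]
    obtain h | h : k + z = 0 ∨ k + z = 1 := by
      have : -1 < k + z := by exact_mod_cast hlo
      have : k + z < 2 := by exact_mod_cast hhi
      omega
    · left
      have : (k : ℝ) + z = 0 := by exact_mod_cast h
      linear_combination hk + hz + π * this
    · right
      have : (k : ℝ) + z = 1 := by exact_mod_cast h
      linear_combination hk + hz + π * this
  · rintro (rfl | rfl)
    · exact ⟨⟨hy₀, by linarith⟩, -z, by push_cast; linarith⟩
    · exact ⟨⟨by linarith, by linarith⟩, 1 - z, by push_cast; linarith⟩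

lemma piCoset_finite (x : ℝ) : (piCoset x).Finite := by
  rw [piCoset_eq_pair]
  exact Set.toFinite _

lemma ncard_piCoset (x : ℝ) : (piCoset x).ncard = 2 := by
  rw [piCoset_eq_pair]
  exact Set.ncard_pair (by linarith [pi_pos])

lemma disjoint_piCoset {x y : ℝ} (h : ∀ k : ℤ, x - y ≠ k * π) :
    Disjoint (piCoset x) (piCoset y) := by
  rw [Set.disjoint_left]
  rintro s ⟨-, k, hk⟩ ⟨-, k', hk'⟩
  exact h (k' - k) (by push_cast; linarith)

section Sset

variable {m₁ m₂ : ℕ} {α t : ℝ}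

lemma Sset_eq_of_cos_eq_zero (ht : Real.cos (m₂ * t) = 0) :
    Sset m₁ m₂ α t = {s | s ∈ Set.Ico 0 (2 * π) ∧ Real.cos (m₂ * s) = 0} := by
  ext s
  simp only [Sset, Set.mem_ofPred_eq, rho_eq_equivRealProd, Equiv.apply_eq_iff_eq, ht,
    Complex.ofReal_zero, zero_mul, mul_eq_zero, Complex.ofReal_eq_zero, Circle.coe_ne_zero,
    or_false]

lemma Sset_eq_piCoset_union (hcop : m₁.Coprime m₂) (heven : Even (m₁ + m₂))
    (ht : Real.cos (m₂ * t) ≠ 0) :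
    Sset m₁ m₂ α t =
      piCoset t ∪ {s | s ∈ Set.Ico 0 (2 * π) ∧ (s - t, s + t) ∈ checkerboard m₁ m₂} := by
  ext s
  simp only [Sset, piCoset, Set.mem_union, Set.mem_ofPred_eq, rho_eq_rho_iff,
    mk_self_mem_checkerboard_iff hcop heven, ht, and_false, or_false, and_or_left]

lemma setOf_mk_sub_add_mem_checkerboard_eq (hcop : m₁.Coprime m₂) (heven : Even (m₁ + m₂))
    {s₀ : ℝ} (h₀ : (s₀ - t, s₀ + t) ∈ checkerboard m₁ m₂) :
    {s | s ∈ Set.Ico 0 (2 * π) ∧ (s - t, s + t) ∈ checkerboard m₁ m₂} = piCoset s₀ := by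
  ext s
  have hsplit : (s - t, s + t) = (s - s₀, s - s₀) + (s₀ - t, s₀ + t) := by
    ext <;> simp only [Prod.fst_add, Prod.snd_add] <;> ring
  simp only [piCoset, Set.mem_ofPred_eq, hsplit, AddSubgroup.add_mem_cancel_right _ h₀,
    mk_self_mem_checkerboard_iff hcop heven]

lemma ncard_Sset_eq_two (hcop : m₁.Coprime m₂) (heven : Even (m₁ + m₂))
    (ht : Real.cos (m₂ * t) ≠ 0)
    (hswap : (∃ s, (s - t, s + t) ∈ checkerboard m₁ m₂) → (t - t, t + t) ∈ checkerboard m₁ m₂) :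
    (Sset m₁ m₂ α t).ncard = 2 := by
  rw [Sset_eq_piCoset_union hcop heven ht]
  by_cases h : ∃ s, (s - t, s + t) ∈ checkerboard m₁ m₂
  · rw [setOf_mk_sub_add_mem_checkerboard_eq hcop heven (hswap h), Set.union_self, ncard_piCoset]
  · simp [not_exists.mp h, ncard_piCoset]

lemma ncard_Sset_eq_four (hcop : m₁.Coprime m₂) (heven : Even (m₁ + m₂))
    (ht : Real.cos (m₂ * t) ≠ 0) {s₀ : ℝ} (h₀ : (s₀ - t, s₀ + t) ∈ checkerboard m₁ m₂)
    (hself : (t - t, t + t) ∉ checkerboard m₁ m₂) :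
    (Sset m₁ m₂ α t).ncard = 4 := by
  have hdisj : Disjoint (piCoset t) (piCoset s₀) := by
    refine disjoint_piCoset fun k hk => hself ?_
    have hdiag : (s₀ - t, s₀ - t) ∈ checkerboard m₁ m₂ :=
      (mk_self_mem_checkerboard_iff hcop heven).mpr ⟨-k, by push_cast; linarith⟩
    convert sub_mem h₀ hdiag using 1
    ext <;> simp only [Prod.fst_sub, Prod.snd_sub] <;> ring
  rw [Sset_eq_piCoset_union hcop heven ht, setOf_mk_sub_add_mem_checkerboard_eq hcop heven h₀,
    Set.ncard_union_eq hdisj (piCoset_finite t) (piCoset_finite s₀), ncard_piCoset,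
    ncard_piCoset]

end Sset

lemma Nat.Coprime.odd_and_odd_of_even_add {m₁ m₂ : ℕ} (hcop : m₁.Coprime m₂)
    (heven : Even (m₁ + m₂)) : Odd m₁ ∧ Odd m₂ := by
  have hne : ¬ (Even m₁ ∧ Even m₂) := fun ⟨h₁, h₂⟩ => by
    simpa [hcop] using Nat.dvd_gcd h₁.two_dvd h₂.two_dvd
  rw [Nat.even_add] at heven
  simp only [← Nat.not_even_iff_odd]
  tauto

lemma mem_Ico_of_natCast_mul_eq_mul_pi {n : ℕ} (hn : 0 < n) {t : ℝ}
    (ht : t ∈ Set.Ico 0 (2 * π)) {N : ℤ} (h : n * t = N * π) : N ∈ Set.Ico 0 (2 * (n : ℤ)) := by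
  have hn' : (0 : ℝ) < n := by exact_mod_cast hn
  have h₀ : (0 : ℝ) ≤ N := by nlinarith [pi_pos, ht.1]
  have h₁ : (N : ℝ) < 2 * n := by nlinarith [pi_pos, ht.2]
  exact ⟨by exact_mod_cast h₀, by exact_mod_cast h₁⟩

lemma setOf_cos_mul_eq_zero {m₂ : ℕ} (hm₂ : 0 < m₂) :
    {s | s ∈ Set.Ico 0 (2 * π) ∧ Real.cos (m₂ * s) = 0} =
      ((Finset.range (2 * m₂)).image fun r : ℕ => (2 * r + 1) * π / (2 * m₂) : Set ℝ) := by
  have hm₂' : (0 : ℝ) < m₂ := by exact_mod_cast hm₂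
  ext s
  simp only [Set.mem_ofPred_eq, Finset.coe_image, Set.mem_image, Finset.mem_coe,
    Finset.mem_range]
  constructor
  · rintro ⟨hs, hc⟩
    obtain ⟨r, hr⟩ := Real.cos_eq_zero_iff.mp hc
    have h2 : ((2 * m₂ : ℕ) : ℝ) * s = (2 * r + 1 : ℤ) * π := by push_cast; linarith
    obtain ⟨h₀, h₁⟩ := mem_Ico_of_natCast_mul_eq_mul_pi (by omega) hs h2
    refine ⟨r.toNat, by omega, ?_⟩
    have hr' : ((r.toNat : ℤ) : ℝ) = r := by exact_mod_cast Int.toNat_of_nonneg (by omega)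
    push_cast at hr'
    rw [hr']
    field_simp
    linarith
  · rintro ⟨r, hr, rfl⟩
    have hr' : (r : ℝ) + 1 ≤ 2 * m₂ := by exact_mod_cast hr
    refine ⟨⟨by positivity, ?_⟩, Real.cos_eq_zero_iff.mpr ⟨r, by push_cast; field_simp⟩⟩
    rw [div_lt_iff₀ (by positivity)]
    nlinarith [pi_pos]

lemma ncard_setOf_cos_mul_eq_zero {m₂ : ℕ} (hm₂ : 0 < m₂) :
    {s | s ∈ Set.Ico 0 (2 * π) ∧ Real.cos (m₂ * s) = 0}.ncard = 2 * m₂ := by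
  have hm₂' : (0 : ℝ) < m₂ := by exact_mod_cast hm₂
  rw [setOf_cos_mul_eq_zero hm₂, Set.ncard_coe_finset, Finset.card_image_of_injective,
    Finset.card_range]
  intro a b hab
  have : (a : ℝ) = b := by
    field_simp at hab
    linarith [pi_pos]
  exact_mod_cast this

section Samples

variable {m₁ m₂ : ℕ}

lemma two_mul_mul_tSample (hm₁ : 0 < m₁) (hm₂ : 0 < m₂) (l : ℕ) :
    2 * m₁ * m₂ * tSample m₁ m₂ l = l * π := by
  rw [tSample]
  field_simp

lemma cos_mul_tSample_eq_zero (hm₁ : 0 < m₁) (hm₂ : 0 < m₂) {l : ℕ}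
    (hl : l ≡ m₁ [MOD 2 * m₁]) : Real.cos (m₂ * tSample m₁ m₂ l) = 0 := by
  obtain ⟨q, rfl⟩ : ∃ q, l = m₁ * (2 * q + 1) := ⟨l / (2 * m₁), by
    have := Nat.div_add_mod l (2 * m₁)
    rw [hl, Nat.mod_eq_of_lt (by omega)] at this
    linarith⟩
  have h := two_mul_mul_tSample hm₁ hm₂ (m₁ * (2 * q + 1))
  push_cast at h
  refine Real.cos_eq_zero_iff.mpr ⟨q, mul_left_cancel₀ (by positivity : (m₁ : ℝ) ≠ 0) ?_⟩
  push_cast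
  linear_combination h / 2

lemma exists_tSample_of_cos_eq_zero (hm₁ : 0 < m₁) (hm₂ : 0 < m₂) {t : ℝ}
    (ht : t ∈ Set.Ico 0 (2 * π)) (hc : Real.cos (m₂ * t) = 0) :
    ∃ l : ℕ, l < 4 * m₁ * m₂ ∧ t = tSample m₁ m₂ l ∧ l ≡ m₁ [MOD 2 * m₁] := by
  have hmem : t ∈ {s | s ∈ Set.Ico 0 (2 * π) ∧ Real.cos (m₂ * s) = 0} := ⟨ht, hc⟩
  rw [setOf_cos_mul_eq_zero hm₂] at hmem
  obtain ⟨r, hr, rfl⟩ := by simpa using hmem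
  refine ⟨m₁ * (2 * r + 1), by nlinarith, ?_, ?_⟩
  · rw [tSample]
    push_cast
    field_simp
  · rw [Nat.ModEq, show m₁ * (2 * r + 1) = m₁ + 2 * m₁ * r by ring, Nat.add_mul_mod_self_left]

lemma mul_mul_tSample_two_mul (hm₁ : 0 < m₁) (hm₂ : 0 < m₂) (l : ℕ) :
    m₁ * m₂ * tSample m₁ m₂ (2 * l) = l * π := by
  have h := two_mul_mul_tSample hm₁ hm₂ (2 * l)
  push_cast at h
  linear_combination h / 2

lemma cos_mul_tSample_two_mul_ne_zero (ho₁ : Odd m₁) (hm₂ : 0 < m₂) (l : ℕ) :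
    Real.cos (m₂ * tSample m₁ m₂ (2 * l)) ≠ 0 := by
  intro hc
  obtain ⟨r, hr⟩ := Real.cos_eq_zero_iff.mp hc
  have h := mul_mul_tSample_two_mul ho₁.pos hm₂ l
  -- the odd multiple `m₁ (2r + 1)` of `π / 2` would equal the even multiple `2l`
  have hZ : (m₁ : ℤ) * (2 * r + 1) = 2 * l := by
    have : ((m₁ : ℤ) * (2 * r + 1) : ℝ) * π = (2 * l : ℤ) * π := by
      push_cast
      linear_combination -2 * (m₁ : ℝ) * hr + 2 * h
    exact_mod_cast mul_right_cancel₀ pi_ne_zero this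
  exact Int.not_even_iff_odd.mpr ((ho₁.natCast (R := ℤ)).mul (odd_two_mul_add_one r))
    (hZ ▸ even_two_mul _)

lemma exists_mul_tSample_two_mul_eq_iff (hm₁ : 0 < m₁) (hm₂ : 0 < m₂) (l : ℕ) :
    (∃ k : ℤ, m₂ * tSample m₁ m₂ (2 * l) = k * π) ↔ m₁ ∣ l := by
  have h := mul_mul_tSample_two_mul hm₁ hm₂ l
  have hm₁' : (m₁ : ℝ) ≠ 0 := by positivity
  rw [← Int.natCast_dvd_natCast]
  constructor
  · rintro ⟨k, hk⟩
    refine ⟨k, ?_⟩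
    have : ((l : ℤ) : ℝ) * π = ((m₁ * k : ℤ) : ℝ) * π := by
      push_cast
      linear_combination -h + (m₁ : ℝ) * hk
    exact_mod_cast mul_right_cancel₀ pi_ne_zero this
  · rintro ⟨k, hk⟩
    refine ⟨k, mul_left_cancel₀ hm₁' ?_⟩
    have hk' : (l : ℝ) = m₁ * k := by exact_mod_cast hk
    linear_combination h + π * hk'

lemma exists_tSample_two_mul_of_mul_mul_eq (hm₁ : 0 < m₁) (hm₂ : 0 < m₂) {t : ℝ}
    (ht : t ∈ Set.Ico 0 (2 * π)) {N : ℤ} (hN : m₁ * m₂ * t = N * π) :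
    ∃ l : ℕ, l < 2 * m₁ * m₂ ∧ t = tSample m₁ m₂ (2 * l) := by
  obtain ⟨h₀, h₁⟩ :=
    mem_Ico_of_natCast_mul_eq_mul_pi (Nat.mul_pos hm₁ hm₂) ht (by push_cast; exact hN)
  push_cast at h₁
  refine ⟨N.toNat, by zify; rw [Int.toNat_of_nonneg h₀]; linarith, ?_⟩
  have hmm : (m₁ : ℝ) * m₂ ≠ 0 := by positivity
  refine mul_left_cancel₀ hmm ?_
  have hN' : ((N.toNat : ℤ) : ℝ) = N := by exact_mod_cast Int.toNat_of_nonneg h₀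
  push_cast at hN'
  rw [mul_mul_tSample_two_mul hm₁ hm₂, hN, hN']

end Samples

lemma rho_periodic {m₁ m₂ : ℕ} (heven : Even (m₁ + m₂)) (α : ℝ) :
    Function.Periodic (rho m₁ m₂ α) π := fun x =>
  rho_eq_rho_iff.mpr (Or.inl (by simpa using mk_intCast_mul_pi_mem_checkerboard heven 1))

lemma rho_eq_rho_zero_iff {m₁ m₂ : ℕ} (hcop : m₁.Coprime m₂) (heven : Even (m₁ + m₂))
    {α s : ℝ} : rho m₁ m₂ α s = rho m₁ m₂ α 0 ↔ ∃ k : ℤ, s = k * π := by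
  simp [rho_eq_rho_iff, mk_self_mem_checkerboard_iff hcop heven]

lemma not_periodic_rho_of_lt_pi {m₁ m₂ : ℕ} (hcop : m₁.Coprime m₂) (heven : Even (m₁ + m₂))
    (α : ℝ) {q : ℝ} (hq₀ : 0 < q) (hqπ : q < π) : ¬ Function.Periodic (rho m₁ m₂ α) q := by
  intro hper
  obtain ⟨k, rfl⟩ := (rho_eq_rho_zero_iff hcop heven).mp (by simpa using hper 0)
  have h₀ : (0 : ℝ) < k := by nlinarith [pi_pos]
  have h₁ : (k : ℝ) < 1 := by nlinarith [pi_pos]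
  have : 0 < k := by exact_mod_cast h₀
  have : k < 1 := by exact_mod_cast h₁
  omega

theorem rhodonea_intersections_even_general (m₁ m₂ : ℕ)
    (hcop : Nat.Coprime m₁ m₂) (heven : Even (m₁ + m₂)) (α : ℝ) :
    (Function.Periodic (rho m₁ m₂ α) Real.pi ∧
      ∀ q : ℝ, 0 < q → q < Real.pi → ¬ Function.Periodic (rho m₁ m₂ α) q) ∧
    (∀ l : ℕ, l < 4 * m₁ * m₂ → l ≡ m₁ [MOD 2 * m₁] →
      (Sset m₁ m₂ α (tSample m₁ m₂ l)).ncard = 2 * m₂) ∧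
    (∀ l : ℕ, l < 2 * m₁ * m₂ → ¬ l ≡ 0 [MOD m₁] →
      (Sset m₁ m₂ α (tSample m₁ m₂ (2 * l))).ncard = 4) ∧
    (∀ t : ℝ, t ∈ Set.Ico (0 : ℝ) (2 * Real.pi) →
      ¬ ((∃ l : ℕ, l < 4 * m₁ * m₂ ∧ t = tSample m₁ m₂ l ∧ l ≡ m₁ [MOD 2 * m₁]) ∨
         (∃ l : ℕ, l < 2 * m₁ * m₂ ∧ t = tSample m₁ m₂ (2 * l) ∧ ¬ l ≡ 0 [MOD m₁])) →
      (Sset m₁ m₂ α t).ncard = 2) := by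
  obtain ⟨ho₁, ho₂⟩ := hcop.odd_and_odd_of_even_add heven
  have hm₁ := ho₁.pos
  have hm₂ := ho₂.pos
  refine ⟨⟨rho_periodic heven α, fun q => not_periodic_rho_of_lt_pi hcop heven α⟩,
    fun l _ hl => ?_, fun l _ hl => ?_, fun t ht hsample => ?_⟩
  · rw [Sset_eq_of_cos_eq_zero (cos_mul_tSample_eq_zero hm₁ hm₂ hl),
      ncard_setOf_cos_mul_eq_zero hm₂]
  · obtain ⟨s₀, hs₀⟩ := (exists_mk_sub_add_mem_checkerboard_iff ho₁ ho₂ hcop).mpr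
      ⟨l, mul_mul_tSample_two_mul hm₁ hm₂ l⟩
    refine ncard_Sset_eq_four hcop heven (cos_mul_tSample_two_mul_ne_zero ho₁ hm₂ l) hs₀ ?_
    rw [mk_sub_add_self_mem_checkerboard_iff, exists_mul_tSample_two_mul_eq_iff hm₁ hm₂]
    exact fun h => hl (Nat.modEq_zero_iff_dvd.mpr h)
  · obtain ⟨hnode, hdouble⟩ := not_or.mp hsample
    refine ncard_Sset_eq_two hcop heven
      (fun hc => hnode (exists_tSample_of_cos_eq_zero hm₁ hm₂ ht hc)) fun hs => ?_
    obtain ⟨N, hN⟩ := (exists_mk_sub_add_mem_checkerboard_iff ho₁ ho₂ hcop).mp hs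
    obtain ⟨l, hl, rfl⟩ := exists_tSample_two_mul_of_mul_mul_eq hm₁ hm₂ ht hN
    rw [mk_sub_add_self_mem_checkerboard_iff, exists_mul_tSample_two_mul_eq_iff hm₁ hm₂]
    by_contra hdvd
    exact hdouble ⟨l, hl, rfl, fun h => hdvd (Nat.modEq_zero_iff_dvd.mp h)⟩

/-- Proposition 2.1 (case `m₁ + m₂` even): minimal period `π` and cardinalities of
`S^{(m)}(t)` for `t ∈ [0, 2π)`. -/
theorem rhodonea_intersections_even (m₁ m₂ : ℕ) (hm₁ : 0 < m₁) (hm₂ : 0 < m₂)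
    (hcop : Nat.Coprime m₁ m₂) (heven : Even (m₁ + m₂)) (α : ℝ) :
    (Function.Periodic (rho m₁ m₂ α) Real.pi ∧
      ∀ q : ℝ, 0 < q → q < Real.pi → ¬ Function.Periodic (rho m₁ m₂ α) q) ∧
    (∀ l : ℕ, l < 4 * m₁ * m₂ → l ≡ m₁ [MOD 2 * m₁] →
      (Sset m₁ m₂ α (tSample m₁ m₂ l)).ncard = 2 * m₂) ∧
    (∀ l : ℕ, l < 2 * m₁ * m₂ → ¬ l ≡ 0 [MOD m₁] →
      (Sset m₁ m₂ α (tSample m₁ m₂ (2 * l))).ncard = 4) ∧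
    (∀ t : ℝ, t ∈ Set.Ico (0 : ℝ) (2 * Real.pi) →
      ¬ ((∃ l : ℕ, l < 4 * m₁ * m₂ ∧ t = tSample m₁ m₂ l ∧ l ≡ m₁ [MOD 2 * m₁]) ∨
         (∃ l : ℕ, l < 2 * m₁ * m₂ ∧ t = tSample m₁ m₂ (2 * l) ∧ ¬ l ≡ 0 [MOD m₁])) →
      (Sset m₁ m₂ α t).ncard = 2) :=
  rhodonea_intersections_even_general m₁ m₂ hcop heven α
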